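/- Let z ~ N(0, σ²) be a Gaussian random variable and φ(z) = max(-ζ, min(z, ζ)) the saturation function with level ζ > 0. Then E[z·φ(z)] = σ²·erf(ζ/(√2·σ)). -/

import Mathlib

open MeasureTheory ProbabilityTheory

/-- The Gauss error function. -/
noncomputable def erf (x : ℝ) : ℝ := (2 / Real.sqrt Real.pi) * ∫ t in (0:ℝ)..x, Real.exp (-t ^ 2)

/-- The symmetric saturation function at level ζ. -/
noncomputable def sat (ζ x : ℝ) : ℝ := max (-ζ) (min x ζ)

/-!
Gaussian integration by parts (Stein's identity `E[z f(z)] = v E[f'(z)]` for `z ~ N(0, v)` and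
`f = sat ζ`). The density `p` of `N(0, v)` satisfies `(-v p)' = x p`. On the tails `sat ζ` is the constant
`±ζ`, so they contribute `ζ v p(ζ)` and `ζ v p(-ζ)`; on `[-ζ, ζ]` integrating `x · (x p)` by
parts produces the same boundary terms with the opposite sign, plus `v ∫_{-ζ}^{ζ} p`. What is
left is `v P(|z| ≤ ζ)`, and the substitution `x = √(2v) t` turns this into `v erf (ζ / √(2v))`.
-/

open Set Filter Topology Real
open scoped NNReal

lemma erf_eq_inv_sqrt_pi_mul_integral (c : ℝ) : erf c = (√π)⁻¹ * ∫ t in -c..c, exp (-t ^ 2) := by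
  have hint (a b : ℝ) : IntervalIntegrable (fun t => exp (-t ^ 2)) volume a b :=
    (by fun_prop : Continuous fun t : ℝ => exp (-t ^ 2)).intervalIntegrable a b
  have hneg : ∫ t in -c..0, exp (-t ^ 2) = ∫ t in (0 : ℝ)..c, exp (-t ^ 2) := by
    have h := intervalIntegral.integral_comp_neg (a := 0) (b := c) fun t => exp (-t ^ 2)
    simp only [neg_sq, neg_zero] at h
    exact h.symm
  rw [erf, ← intervalIntegral.integral_add_adjacent_intervals (hint (-c) 0) (hint 0 c), hneg]
  ring

lemma sat_eq_neg_of_le_neg {ζ x : ℝ} (hx : x ≤ -ζ) : sat ζ x = -ζ :=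
  max_eq_left ((min_le_left x ζ).trans hx)

lemma sat_eq_of_le {ζ x : ℝ} (hζ : 0 ≤ ζ) (hx : ζ ≤ x) : sat ζ x = ζ := by
  rw [sat, min_eq_right hx, max_eq_right (by linarith)]

lemma sat_eq_self_of_mem_Icc {ζ x : ℝ} (hx : x ∈ Icc (-ζ) ζ) : sat ζ x = x := by
  rw [sat, min_eq_left hx.2, max_eq_right hx.1]

lemma abs_sat_le {ζ : ℝ} (hζ : 0 ≤ ζ) (x : ℝ) : |sat ζ x| ≤ ζ :=
  abs_le.2 ⟨le_max_left _ _, max_le (by linarith) (min_le_right _ _)⟩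

lemma continuous_sat (ζ : ℝ) : Continuous (sat ζ) := by
  unfold sat; fun_prop

lemma integral_eq_integral_Iic_add_intervalIntegral_add_integral_Ioi {E : Type*}
    [NormedAddCommGroup E] [NormedSpace ℝ E] {f : ℝ → E} (hf : Integrable f) (a b : ℝ) :
    ∫ x, f x = (∫ x in Iic a, f x) + (∫ x in a..b, f x) + ∫ x in Ioi b, f x := by
  rw [← intervalIntegral.integral_Iic_sub_Iic hf.integrableOn hf.integrableOn,
    ← intervalIntegral.integral_Iic_add_Ioi (b := b) hf.integrableOn hf.integrableOn]
  abel

namespace ProbabilityTheory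

variable {μ : ℝ} {v : ℝ≥0}

lemma hasDerivAt_gaussianPDFReal (μ : ℝ) (v : ℝ≥0) (x : ℝ) :
    HasDerivAt (gaussianPDFReal μ v) (-((x - μ) / v) * gaussianPDFReal μ v x) x := by
  rw [gaussianPDFReal_def]
  refine ((((hasDerivAt_id' x).sub_const μ).fun_pow 2).fun_neg.div_const (2 * (v : ℝ))).exp.const_mul
    (√(2 * π * v))⁻¹ |>.congr_deriv ?_
  ring

lemma integrable_sub_mul_gaussianPDFReal (μ : ℝ) (v : ℝ≥0) :
    Integrable (fun x => (x - μ) * gaussianPDFReal μ v x) := by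
  rcases eq_or_ne v 0 with rfl | hv
  · simp
  have h := ((integrable_mul_exp_neg_mul_sq (b := (2 * v : ℝ)⁻¹) (by positivity)).const_mul
    (√(2 * π * v))⁻¹).comp_sub_right μ
  refine h.congr (ae_of_all _ fun x => ?_)
  simp only [gaussianPDFReal]; ring_nf

lemma integrable_sub_div_mul_gaussianPDFReal (μ : ℝ) (v : ℝ≥0) :
    Integrable (fun x => -((x - μ) / v) * gaussianPDFReal μ v x) :=
  ((integrable_sub_mul_gaussianPDFReal μ v).const_mul (-(v : ℝ)⁻¹)).congr
    (ae_of_all _ fun x => by ring)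

lemma tendsto_gaussianPDFReal_atTop (μ : ℝ) (v : ℝ≥0) :
    Tendsto (gaussianPDFReal μ v) atTop (𝓝 0) :=
  tendsto_zero_of_hasDerivAt_of_integrableOn_Ioi (a := 0)
    (fun x _ => hasDerivAt_gaussianPDFReal μ v x)
    (integrable_sub_div_mul_gaussianPDFReal μ v).integrableOn
    (integrable_gaussianPDFReal μ v).integrableOn

lemma tendsto_gaussianPDFReal_atBot (μ : ℝ) (v : ℝ≥0) :
    Tendsto (gaussianPDFReal μ v) atBot (𝓝 0) :=
  tendsto_zero_of_hasDerivAt_of_integrableOn_Iic (a := 0)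
    (fun x _ => hasDerivAt_gaussianPDFReal μ v x)
    (integrable_sub_div_mul_gaussianPDFReal μ v).integrableOn
    (integrable_gaussianPDFReal μ v).integrableOn

lemma hasDerivAt_neg_mul_gaussianPDFReal (hv : v ≠ 0) (x : ℝ) :
    HasDerivAt (fun y => -(v * gaussianPDFReal μ v y)) ((x - μ) * gaussianPDFReal μ v x) x := by
  refine ((hasDerivAt_gaussianPDFReal μ v x).const_mul (v : ℝ)).neg.congr_deriv ?_
  field_simp

lemma integral_Ioi_sub_mul_gaussianPDFReal (hv : v ≠ 0) (a : ℝ) :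
    ∫ x in Ioi a, (x - μ) * gaussianPDFReal μ v x = v * gaussianPDFReal μ v a := by
  rw [integral_Ioi_of_hasDerivAt_of_tendsto
    (hasDerivAt_neg_mul_gaussianPDFReal hv a).continuousAt.continuousWithinAt
    (fun x _ => hasDerivAt_neg_mul_gaussianPDFReal hv x)
    (integrable_sub_mul_gaussianPDFReal μ v).integrableOn
    (by simpa using ((tendsto_gaussianPDFReal_atTop μ v).const_mul (v : ℝ)).neg)]
  ring

lemma integral_Iic_sub_mul_gaussianPDFReal (hv : v ≠ 0) (a : ℝ) :
    ∫ x in Iic a, (x - μ) * gaussianPDFReal μ v x = -(v * gaussianPDFReal μ v a) := by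
  rw [integral_Iic_of_hasDerivAt_of_tendsto
    (hasDerivAt_neg_mul_gaussianPDFReal hv a).continuousAt.continuousWithinAt
    (fun x _ => hasDerivAt_neg_mul_gaussianPDFReal hv x)
    (integrable_sub_mul_gaussianPDFReal μ v).integrableOn
    (by simpa using ((tendsto_gaussianPDFReal_atBot μ v).const_mul (v : ℝ)).neg)]
  ring

lemma intervalIntegral_sub_sq_mul_gaussianPDFReal (hv : v ≠ 0) (a b : ℝ) :
    ∫ x in a..b, (x - μ) ^ 2 * gaussianPDFReal μ v x
      = v * ((a - μ) * gaussianPDFReal μ v a - (b - μ) * gaussianPDFReal μ v b)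
        + v * ∫ x in a..b, gaussianPDFReal μ v x := by
  simp_rw [sq, mul_assoc]
  rw [intervalIntegral.integral_mul_deriv_eq_deriv_mul
    (fun x _ => (hasDerivAt_id' x).sub_const μ)
    (fun x _ => hasDerivAt_neg_mul_gaussianPDFReal hv x)
    intervalIntegrable_const (integrable_sub_mul_gaussianPDFReal μ v).intervalIntegrable]
  simp only [one_mul, intervalIntegral.integral_neg, intervalIntegral.integral_const_mul]
  ring

lemma intervalIntegral_gaussianPDFReal_eq_erf (hv : v ≠ 0) (a : ℝ) :
    ∫ x in -a..a, gaussianPDFReal 0 v x = erf (a / √(2 * v)) := by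
  have hs : 0 < √(2 * (v : ℝ)) := by positivity
  have hpdf (x : ℝ) : gaussianPDFReal 0 v x = (√(2 * π * v))⁻¹ * exp (-(x / √(2 * v)) ^ 2) := by
    rw [gaussianPDFReal, div_pow, sq_sqrt (by positivity), sub_zero, neg_div]
  simp_rw [hpdf]
  rw [intervalIntegral.integral_const_mul,
    intervalIntegral.integral_comp_div (fun t => exp (-t ^ 2)) hs.ne', smul_eq_mul, neg_div,
    erf_eq_inv_sqrt_pi_mul_integral, mul_comm 2 π, mul_assoc, sqrt_mul pi_pos.le]
  field_simp

lemma integral_mul_sat_mul_gaussianPDFReal (hv : v ≠ 0) {ζ : ℝ} (hζ : 0 ≤ ζ) :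
    ∫ x, x * sat ζ x * gaussianPDFReal 0 v x = v * ∫ x in -ζ..ζ, gaussianPDFReal 0 v x := by
  have hxp : Integrable fun x => x * gaussianPDFReal 0 v x := by
    simpa using integrable_sub_mul_gaussianPDFReal 0 v
  have hint : Integrable fun x => x * sat ζ x * gaussianPDFReal 0 v x :=
    (hxp.bdd_mul (continuous_sat ζ).aestronglyMeasurable
      (ae_of_all _ fun x => (norm_eq_abs _).trans_le (abs_sat_le hζ x))).congr
      (ae_of_all _ fun x => by ring)
  have hleft : ∫ x in Iic (-ζ), x * sat ζ x * gaussianPDFReal 0 v x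
      = -ζ * ∫ x in Iic (-ζ), x * gaussianPDFReal 0 v x := by
    rw [← integral_const_mul]
    refine setIntegral_congr_fun measurableSet_Iic fun x hx => ?_
    rw [sat_eq_neg_of_le_neg hx]; ring
  have hmiddle : ∫ x in -ζ..ζ, x * sat ζ x * gaussianPDFReal 0 v x
      = ∫ x in -ζ..ζ, x ^ 2 * gaussianPDFReal 0 v x := by
    refine intervalIntegral.integral_congr fun x hx => ?_
    rw [uIcc_of_le (by linarith)] at hx
    simp only [sat_eq_self_of_mem_Icc hx]; ring
  have hright : ∫ x in Ioi ζ, x * sat ζ x * gaussianPDFReal 0 v x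
      = ζ * ∫ x in Ioi ζ, x * gaussianPDFReal 0 v x := by
    rw [← integral_const_mul]
    refine setIntegral_congr_fun measurableSet_Ioi fun x hx => ?_
    rw [sat_eq_of_le hζ (le_of_lt hx)]; ring
  have hIic := integral_Iic_sub_mul_gaussianPDFReal (μ := 0) hv (-ζ)
  have hsq := intervalIntegral_sub_sq_mul_gaussianPDFReal (μ := 0) hv (-ζ) ζ
  have hIoi := integral_Ioi_sub_mul_gaussianPDFReal (μ := 0) hv ζ
  simp only [sub_zero] at hIic hsq hIoi
  rw [integral_eq_integral_Iic_add_intervalIntegral_add_integral_Ioi hint (-ζ) ζ, hleft, hmiddle,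
    hright, hIic, hsq, hIoi]
  ring

lemma integral_mul_sat_gaussianReal (hv : v ≠ 0) {ζ : ℝ} (hζ : 0 ≤ ζ) :
    ∫ x, x * sat ζ x ∂gaussianReal 0 v = v * erf (ζ / √(2 * v)) := by
  rw [integral_gaussianReal_eq_integral_smul hv, ← intervalIntegral_gaussianPDFReal_eq_erf hv,
    ← integral_mul_sat_mul_gaussianPDFReal hv hζ]
  simp_rw [smul_eq_mul, mul_comm]

end ProbabilityTheory

theorem expectation_mul_sat_gaussian (σ : ℝ) (hσ : 0 < σ) (ζ : ℝ) (hζ : 0 < ζ) :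
    ∫ x, x * sat ζ x ∂(gaussianReal 0 ⟨σ ^ 2, sq_nonneg σ⟩)
      = σ ^ 2 * erf (ζ / (Real.sqrt 2 * σ)) := by
  set v : ℝ≥0 := ⟨σ ^ 2, sq_nonneg σ⟩
  have hv_coe : (v : ℝ) = σ ^ 2 := rfl
  have hv : v ≠ 0 := by rw [← NNReal.coe_ne_zero, hv_coe]; positivity
  rw [integral_mul_sat_gaussianReal hv hζ.le, hv_coe, sqrt_mul zero_le_two, sqrt_sq hσ.le]
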